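/- Every level set {(x,y) : H(x,y) = h} of H(x,y) = x²/2 + x³/3 + y²/2 + y³/3 with 0 < h < 1/6 contains a connected component that is a compact set contained in the open square (-1,1/2) × (-1,1/2) and not containing the origin, while H(0,0) = 0 and H(-1,0) = H(0,-1) = 1/6. -/
import Mathlib

theorem stmt_16 (H : ℝ × ℝ → ℝ)
    (hH : ∀ p : ℝ × ℝ, H p = p.1 ^ 2 / 2 + p.1 ^ 3 / 3 + p.2 ^ 2 / 2 + p.2 ^ 3 / 3) :
    H (0, 0) = 0 ∧ H (-1, 0) = 1 / 6 ∧ H (0, -1) = 1 / 6 ∧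
    ∀ h : ℝ, 0 < h → h < 1 / 6 →
      ∃ p ∈ {q : ℝ × ℝ | H q = h},
        IsCompact (connectedComponentIn {q : ℝ × ℝ | H q = h} p) ∧
        connectedComponentIn {q : ℝ × ℝ | H q = h} p ⊆
          Set.Ioo (-1 : ℝ) (1 / 2) ×ˢ Set.Ioo (-1 : ℝ) (1 / 2) ∧
        ((0 : ℝ), (0 : ℝ)) ∉ connectedComponentIn {q : ℝ × ℝ | H q = h} p := by
  have hHfun : H = fun p : ℝ × ℝ => p.1 ^ 2 / 2 + p.1 ^ 3 / 3 + p.2 ^ 2 / 2 + p.2 ^ 3 / 3 :=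
    funext hH
  have hcont : Continuous H := by rw [hHfun]; fun_prop
  refine ⟨by rw [hH]; norm_num, by rw [hH]; norm_num, by rw [hH]; norm_num, ?_⟩
  intro h h0 h16
  -- find x0 ∈ (0, 1/2) with f x0 = h, where f t = t²/2 + t³/3
  obtain ⟨x0, hx0mem, hx0⟩ : ∃ x0 ∈ Set.Ioo (0 : ℝ) (1 / 2),
      x0 ^ 2 / 2 + x0 ^ 3 / 3 = h := by
    have hc : ContinuousOn (fun t : ℝ => t ^ 2 / 2 + t ^ 3 / 3) (Set.Icc 0 (1 / 2)) := by
      fun_prop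
    have hiv := intermediate_value_Ioo (by norm_num : (0 : ℝ) ≤ 1 / 2) hc
    have hmem : h ∈ Set.Ioo ((fun t : ℝ => t ^ 2 / 2 + t ^ 3 / 3) 0)
        ((fun t : ℝ => t ^ 2 / 2 + t ^ 3 / 3) (1 / 2)) := by
      constructor <;> norm_num [h0]; linarith
    obtain ⟨x0, hx0, hfx0⟩ := hiv hmem
    exact ⟨x0, hx0, hfx0⟩
  set S : Set (ℝ × ℝ) := {q : ℝ × ℝ | H q = h} with hS
  set p : ℝ × ℝ := (x0, 0) with hp
  have hpS : p ∈ S := by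
    simp only [hS, Set.mem_setOf_eq, hH, hp]
    norm_num [hx0]
  set K : Set (ℝ × ℝ) := Set.Icc (-1 : ℝ) (1 / 2) ×ˢ Set.Icc (-1 : ℝ) (1 / 2) with hK
  set U : Set (ℝ × ℝ) := Set.Ioo (-1 : ℝ) (1 / 2) ×ˢ Set.Ioo (-1 : ℝ) (1 / 2) with hU
  have hbdry : ∀ q : ℝ × ℝ, q ∈ S → q ∈ K → q ∈ U := by
    rintro ⟨a, b⟩ hqS hqK
    obtain ⟨⟨ha1, ha2⟩, ⟨hb1, hb2⟩⟩ := hqK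
    dsimp only at ha1 ha2 hb1 hb2
    have hHq : a ^ 2 / 2 + a ^ 3 / 3 + b ^ 2 / 2 + b ^ 3 / 3 = h := by
      have := hqS; simpa [hS, hH] using this
    have hfa : 0 ≤ a ^ 2 / 2 + a ^ 3 / 3 := by nlinarith [sq_nonneg a]
    have hfb : 0 ≤ b ^ 2 / 2 + b ^ 3 / 3 := by nlinarith [sq_nonneg b]
    refine ⟨⟨?_, ?_⟩, ?_, ?_⟩
    · rcases lt_or_eq_of_le ha1 with h' | h'
      · exact h'
      · exfalso; rw [← h'] at hHq; nlinarith
    · rcases lt_or_eq_of_le ha2 with h' | h'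
      · exact h'
      · exfalso; rw [h'] at hHq; nlinarith
    · rcases lt_or_eq_of_le hb1 with h' | h'
      · exact h'
      · exfalso; rw [← h'] at hHq; nlinarith
    · rcases lt_or_eq_of_le hb2 with h' | h'
      · exact h'
      · exfalso; rw [h'] at hHq; nlinarith
  have hSclosed : IsClosed S := isClosed_eq hcont continuous_const
  have hKcompact : IsCompact K := isCompact_Icc.prod isCompact_Icc
  have hUopen : IsOpen U := (isOpen_Ioo).prod isOpen_Ioo
  have hKclosed : IsClosed K := isClosed_Icc.prod isClosed_Icc
  have hUK : U ⊆ K := Set.prod_mono Set.Ioo_subset_Icc_self Set.Ioo_subset_Icc_self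
  set C : Set (ℝ × ℝ) := connectedComponentIn S p with hC
  have hCS : C ⊆ S := connectedComponentIn_subset S p
  have hpC : p ∈ C := mem_connectedComponentIn hpS
  have hpU : p ∈ U := by
    refine ⟨⟨by linarith [hx0mem.1], hx0mem.2⟩, by norm_num, by norm_num⟩
  have hCconn : IsPreconnected C := isPreconnected_connectedComponentIn
  -- C ⊆ K
  have hCK : C ⊆ K := by
    by_contra hnot
    obtain ⟨q, hqC, hqK⟩ := Set.not_subset.mp hnot
    have hcover : C ⊆ U ∪ Kᶜ := by
      intro r hr
      by_cases hrK : r ∈ K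
      · exact Or.inl (hbdry r (hCS hr) hrK)
      · exact Or.inr hrK
    have := hCconn U Kᶜ hUopen hKclosed.isOpen_compl hcover ⟨p, hpC, hpU⟩ ⟨q, hqC, hqK⟩
    obtain ⟨r, _, hrU, hrK⟩ := this
    exact hrK (hUK hrU)
  have hCU : C ⊆ U := fun q hq => hbdry q (hCS hq) (hCK hq)
  have hCclosed : IsClosed C := by
    rw [hC, connectedComponentIn_eq_image hpS]
    exact hSclosed.isClosedEmbedding_subtypeVal.isClosedMap _ isClosed_connectedComponent
  refine ⟨p, hpS, hKcompact.of_isClosed_subset hCclosed hCK, hCU, ?_⟩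
  intro h0C
  have : ((0 : ℝ), (0 : ℝ)) ∈ S := hCS h0C
  simp only [hS, Set.mem_setOf_eq, hH] at this
  norm_num at this
  linarith
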